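/- There exist an open neighborhood U ⊆ ℂ² of (1,1) and holomorphic maps g⁺, g⁻ : U → ℂ² with g^±(1,1) = (1/2, 1/4) such that for every (s₁,s₂) ∈ U the point g^±(s₁,s₂) is a non-degenerate critical point of the function (z₁,z₂) ↦ Φ^{±(s₁,s₂)}(z₁,z₂): both complex partial derivatives ∂Φ^{±(s₁,s₂)}/∂z₁ and ∂Φ^{±(s₁,s₂)}/∂z₂ vanish at g^±(s₁,s₂), and the determinant of the complex Hessian in (z₁,z₂) of Φ^{±(s₁,s₂)} at g^±(s₁,s₂) is nonzero. -/

import Mathlib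

open Real

/-- The dilogarithm `Li₂(z) = -∫₀¹ log(1 - t z)/t dt` (principal branch of `log`). -/
noncomputable def Li2 (z : ℂ) : ℂ :=
  -∫ t in (0:ℝ)..1, Complex.log (1 - (t:ℂ) * z) / (t:ℂ)

/-- The potential function `Φ^{ε(s₁,s₂)}(z₁,z₂)` of the Whitehead link, where `ε = 1`
gives `Φ^{+(s₁,s₂)}` and `ε = -1` gives `Φ^{-(s₁,s₂)}`. -/
noncomputable def PhiS (ε s₁ s₂ z₁ z₂ : ℂ) : ℂ :=
  (1 / (2 * (π:ℂ) * Complex.I)) *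
    (ε * (2*(π:ℂ)*Complex.I*(s₁ - 1)) * (2*(π:ℂ)*Complex.I*(z₁ - 1/2))
     - (2*(π:ℂ)*Complex.I*(s₂ - 1)) * (2*(π:ℂ)*Complex.I*z₁ + 2*(π:ℂ)*Complex.I*z₂)
     + Li2 (Complex.exp (2*(π:ℂ)*Complex.I*(s₂ - 1) - 2*(π:ℂ)*Complex.I*z₁
            - 2*(π:ℂ)*Complex.I*z₂))
     - Li2 (Complex.exp (2*(π:ℂ)*Complex.I*(s₂ - 1) - 2*(π:ℂ)*Complex.I*z₂))
     + Li2 (Complex.exp (2*(π:ℂ)*Complex.I*z₂))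
     - Li2 (Complex.exp (2*(π:ℂ)*Complex.I*(z₁ + z₂)))
     + Li2 (Complex.exp (2*(π:ℂ)*Complex.I*z₁)))

/-- `p` is a non-degenerate critical point of `(z₁,z₂) ↦ PhiS ε s.1 s.2 z₁ z₂`:
both complex partial derivatives vanish at `p` and the determinant of the complex
Hessian at `p` is nonzero. -/
noncomputable def IsNondegCritPt (ε : ℂ) (s p : ℂ × ℂ) : Prop :=
  deriv (fun z => PhiS ε s.1 s.2 z p.2) p.1 = 0 ∧
  deriv (fun z => PhiS ε s.1 s.2 p.1 z) p.2 = 0 ∧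
  deriv (fun z => deriv (fun w => PhiS ε s.1 s.2 w p.2) z) p.1 *
      deriv (fun z => deriv (fun w => PhiS ε s.1 s.2 p.1 w) z) p.2 -
    (deriv (fun z => deriv (fun w => PhiS ε s.1 s.2 z w) p.2) p.1) ^ 2 ≠ 0

/-!
Differentiating under the integral sign gives `Li₂'(z) = -log (1 - z) / z`, so the partial
derivatives of `Φ^{ε(s)}` in `(z₁, z₂)` are explicit sums of the logarithms `log (1 - e)` of the
five exponentials `e`, and its Hessian has entries `2πi · Σ ± e / (1 - e)`. At `s = (1, 1)`,
`z = (1/2, 1/4)` the exponentials are `i, -i, i, -i, -1`: the gradient vanishes because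
`log (1 - i) + log (1 + i) = log 2`, and the Hessian determinant is `(2πi)² (-1 - i) ≠ 0`.
The holomorphic implicit function theorem applied to the gradient then gives a holomorphic branch
of critical points through `(1/2, 1/4)`, for `ε = 1` and `ε = -1` alike, along which the
determinant stays nonzero by continuity.
-/

open Complex Set Metric Filter Topology MeasureTheory intervalIntegral Interval

lemma one_sub_ofReal_mul_mem_slitPlane {w : ℂ} (hw : 1 - w ∈ slitPlane) {t : ℝ}
    (ht : t ∈ Icc (0 : ℝ) 1) : 1 - (t : ℂ) * w ∈ slitPlane := by
  have := starConvex_one_slitPlane hw (sub_nonneg.2 ht.2) ht.1 (by ring)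
  convert this using 1
  simp only [real_smul, ofReal_sub, ofReal_one]
  ring

lemma exists_closedBall_norm_one_sub_mul_ge {z : ℂ} (hz : 1 - z ∈ slitPlane) :
    ∃ r > 0, ∃ m > 0, ∀ w ∈ closedBall z r,
      1 - w ∈ slitPlane ∧ ∀ t ∈ Icc (0 : ℝ) 1, m ≤ ‖1 - (t : ℂ) * w‖ := by
  obtain ⟨δ, hδ, hball⟩ := Metric.isOpen_iff.mp
    (isOpen_slitPlane.preimage (continuous_const.sub continuous_id)) z hz
  have hsub : closedBall z (δ / 2) ⊆ {w | 1 - w ∈ slitPlane} :=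
    (closedBall_subset_ball (by linarith)).trans hball
  obtain ⟨p, hp, hmin⟩ := (isCompact_Icc.prod (isCompact_closedBall z (δ / 2))).exists_isMinOn
    ((nonempty_Icc.mpr zero_le_one).prod ⟨z, mem_closedBall_self (by positivity)⟩)
    (by fun_prop : Continuous fun p : ℝ × ℂ => ‖1 - (p.1 : ℂ) * p.2‖).continuousOn
  refine ⟨δ / 2, by positivity, _, norm_pos_iff.mpr (slitPlane_ne_zero
    (one_sub_ofReal_mul_mem_slitPlane (hsub hp.2) hp.1)), fun w hw => ⟨hsub hw, fun t ht => ?_⟩⟩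
  exact hmin (show (t, w) ∈ Icc (0 : ℝ) 1 ×ˢ closedBall z (δ / 2) from ⟨ht, hw⟩)

lemma norm_log_one_sub_mul_le {w : ℂ} {m : ℝ} (hw : 1 - w ∈ slitPlane)
    (hm : ∀ t ∈ Icc (0 : ℝ) 1, m ≤ ‖1 - (t : ℂ) * w‖) (hm0 : 0 < m) {t : ℝ}
    (ht : t ∈ Icc (0 : ℝ) 1) : ‖log (1 - (t : ℂ) * w)‖ ≤ ‖w‖ / m * t := by
  have hderiv : ∀ u ∈ Icc (0 : ℝ) 1, HasDerivWithinAt (fun u : ℝ => log (1 - (u : ℂ) * w))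
      (-w / (1 - (u : ℂ) * w)) (Icc 0 1) u := fun u hu => by
    have h := ((hasDerivAt_id' (u : ℂ)).mul_const w).comp_ofReal.const_sub 1
    simpa using (h.clog_real (one_sub_ofReal_mul_mem_slitPlane hw hu)).hasDerivWithinAt
  have hbound : ∀ u ∈ Icc (0 : ℝ) 1, ‖-w / (1 - (u : ℂ) * w)‖ ≤ ‖w‖ / m := fun u hu => by
    rw [norm_div, norm_neg]
    exact div_le_div_of_nonneg_left (norm_nonneg w) hm0 (hm u hu)
  have := (convex_Icc (0 : ℝ) 1).norm_image_sub_le_of_norm_hasDerivWithin_le hderiv hbound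
    (left_mem_Icc.mpr zero_le_one) ht
  simpa [abs_of_nonneg ht.1] using this

lemma aestronglyMeasurable_log_one_sub_mul_div {w : ℂ} (hw : 1 - w ∈ slitPlane) :
    AEStronglyMeasurable (fun t : ℝ => log (1 - (t : ℂ) * w) / t) (volume.restrict (Ι 0 1)) := by
  rw [uIoc_of_le zero_le_one]
  refine ContinuousOn.aestronglyMeasurable (fun t ht => ?_) measurableSet_Ioc
  have hlog : ContinuousAt (fun t : ℝ => log (1 - (t : ℂ) * w)) t :=
    (continuousAt_clog (one_sub_ofReal_mul_mem_slitPlane hw (Ioc_subset_Icc_self ht))).comp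
      (f := fun t : ℝ => 1 - (t : ℂ) * w) (by fun_prop)
  exact (hlog.div (by fun_prop) (ofReal_ne_zero.mpr ht.1.ne')).continuousWithinAt

lemma intervalIntegrable_log_one_sub_mul_div {w : ℂ} {m : ℝ} (hw : 1 - w ∈ slitPlane)
    (hm : ∀ t ∈ Icc (0 : ℝ) 1, m ≤ ‖1 - (t : ℂ) * w‖) (hm0 : 0 < m) :
    IntervalIntegrable (fun t : ℝ => log (1 - (t : ℂ) * w) / t) volume 0 1 := by
  have hmeas := aestronglyMeasurable_log_one_sub_mul_div hw
  rw [uIoc_of_le zero_le_one] at hmeas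
  rw [intervalIntegrable_iff, uIoc_of_le zero_le_one]
  refine Integrable.mono' (g := fun _ => ‖w‖ / m) (integrableOn_const measure_Ioc_lt_top.ne)
    hmeas ((ae_restrict_iff' measurableSet_Ioc).mpr (Eventually.of_forall fun t ht => ?_))
  rw [norm_div, norm_real, Real.norm_of_nonneg ht.1.le, div_le_iff₀ ht.1]
  exact norm_log_one_sub_mul_le hw hm hm0 (Ioc_subset_Icc_self ht)

lemma integral_inv_one_sub_mul {z : ℂ} (hz : 1 - z ∈ slitPlane) (hz0 : z ≠ 0) :
    ∫ t in (0 : ℝ)..1, (1 - (t : ℂ) * z)⁻¹ = -log (1 - z) / z := by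
  have hmem : ∀ t ∈ uIcc (0 : ℝ) 1, 1 - (t : ℂ) * z ∈ slitPlane := fun t ht =>
    one_sub_ofReal_mul_mem_slitPlane hz (by rwa [uIcc_of_le zero_le_one] at ht)
  have hderiv : ∀ t ∈ uIcc (0 : ℝ) 1,
      HasDerivAt (fun t : ℝ => -log (1 - (t : ℂ) * z) / z) (1 - (t : ℂ) * z)⁻¹ t := by
    intro t ht
    have h := ((hasDerivAt_id' (t : ℂ)).mul_const z).comp_ofReal.const_sub 1
    refine ((h.clog_real (hmem t ht)).neg.div_const z).congr_deriv ?_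
    field_simp
  rw [integral_eq_sub_of_hasDerivAt hderiv (ContinuousOn.intervalIntegrable
    (ContinuousOn.inv₀ (by fun_prop) fun t ht => slitPlane_ne_zero (hmem t ht)))]
  simp

theorem hasDerivAt_Li2 {z : ℂ} (hz : 1 - z ∈ slitPlane) (hz0 : z ≠ 0) :
    HasDerivAt Li2 (-log (1 - z) / z) z := by
  obtain ⟨r, hr, m, hm0, hball⟩ := exists_closedBall_norm_one_sub_mul_ge hz
  have h_diff : ∀ᵐ t : ℝ, t ∈ Ι (0 : ℝ) 1 → ∀ w ∈ closedBall z r,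
      HasDerivAt (fun w => log (1 - (t : ℂ) * w) / t) (-(1 - (t : ℂ) * w)⁻¹) w := by
    refine Eventually.of_forall fun t ht w hw => ?_
    rw [uIoc_of_le zero_le_one] at ht
    have h := ((hasDerivAt_id' w).const_mul (t : ℂ)).const_sub 1
    refine ((h.clog (one_sub_ofReal_mul_mem_slitPlane (hball w hw).1
      (Ioc_subset_Icc_self ht))).div_const (t : ℂ)).congr_deriv ?_
    have : (t : ℂ) ≠ 0 := ofReal_ne_zero.mpr ht.1.ne'
    field_simp
  have h_bound : ∀ᵐ t : ℝ, t ∈ Ι (0 : ℝ) 1 → ∀ w ∈ closedBall z r,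
      ‖-(1 - (t : ℂ) * w)⁻¹‖ ≤ m⁻¹ := by
    refine Eventually.of_forall fun t ht w hw => ?_
    rw [uIoc_of_le zero_le_one] at ht
    rw [norm_neg, norm_inv]
    exact inv_anti₀ hm0 ((hball w hw).2 t (Ioc_subset_Icc_self ht))
  have hF'_meas : AEStronglyMeasurable (fun t : ℝ => -(1 - (t : ℂ) * z)⁻¹)
      (volume.restrict (Ι 0 1)) :=
    (ContinuousOn.inv₀ (by fun_prop) fun t ht => slitPlane_ne_zero
      (one_sub_ofReal_mul_mem_slitPlane hz (uIoc_subset_uIcc.trans_eq (uIcc_of_le zero_le_one)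
        ht))).neg.aestronglyMeasurable measurableSet_uIoc
  have hz' := hball z (mem_closedBall_self hr.le)
  have h := (hasDerivAt_integral_of_dominated_loc_of_deriv_le (closedBall_mem_nhds z hr)
    (eventually_of_mem (closedBall_mem_nhds z hr) fun w hw =>
      aestronglyMeasurable_log_one_sub_mul_div (hball w hw).1)
    (intervalIntegrable_log_one_sub_mul_div hz'.1 hz'.2 hm0) hF'_meas h_bound
    intervalIntegrable_const h_diff).2.neg
  rwa [intervalIntegral.integral_neg, neg_neg, integral_inv_one_sub_mul hz hz0] at h

lemma hasDerivAt_of_affine {𝕜 : Type*} [NontriviallyNormedField 𝕜] {f : 𝕜 → 𝕜} (b x : 𝕜)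
    (hf : ∀ w, f w = f 0 + b * w) :
    HasDerivAt f b x := by
  rw [funext hf]
  simpa using ((hasDerivAt_id' x).const_mul b).const_add (f 0)

lemma hasDerivAt_Li2_exp_affine {f : ℂ → ℂ} (b x : ℂ) (hf : ∀ w, f w = f 0 + b * w)
    (h : 1 - exp (f x) ∈ slitPlane) :
    HasDerivAt (fun w => Li2 (exp (f w))) (-log (1 - exp (f x)) * b) x := by
  refine ((hasDerivAt_Li2 h (Complex.exp_ne_zero _)).comp x
    (hasDerivAt_of_affine b x hf).cexp).congr_deriv ?_
  field_simp [Complex.exp_ne_zero]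

lemma hasDerivAt_log_one_sub_exp_affine {f : ℂ → ℂ} (b x : ℂ) (hf : ∀ w, f w = f 0 + b * w)
    (h : 1 - exp (f x) ∈ slitPlane) :
    HasDerivAt (fun w => log (1 - exp (f w))) (-(exp (f x) / (1 - exp (f x))) * b) x := by
  refine (((hasDerivAt_of_affine b x hf).cexp.const_sub 1).clog h).congr_deriv ?_
  ring

@[fun_prop]
theorem ContDiffAt.clog {E : Type*} [NormedAddCommGroup E] [NormedSpace ℂ E] {n : WithTop ℕ∞}
    {f : E → ℂ} {x : E} (hf : ContDiffAt ℂ n f x) (h : f x ∈ slitPlane) :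
    ContDiffAt ℂ n (fun y => Complex.log (f y)) x :=
  (contDiffAt_log h).comp x hf

section Linear

variable {𝕜 : Type*} [NontriviallyNormedField 𝕜]

theorem ContinuousLinearMap.isInvertible_of_injective [CompleteSpace 𝕜] {E : Type*}
    [NormedAddCommGroup E] [NormedSpace 𝕜 E] [FiniteDimensional 𝕜 E] {f : E →L[𝕜] E}
    (hf : Function.Injective f) : f.IsInvertible :=
  ⟨(LinearEquiv.ofInjectiveEndo (f : E →ₗ[𝕜] E) hf).toContinuousLinearEquiv,
    ContinuousLinearMap.ext fun _ => rfl⟩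

theorem ContinuousLinearMap.isInvertible_of_apply_eq_smul_add_smul [CompleteSpace 𝕜]
    {L : 𝕜 × 𝕜 →L[𝕜] 𝕜 × 𝕜} {a b : 𝕜 × 𝕜} (hL : ∀ v, L v = v.1 • a + v.2 • b)
    (hdet : a.1 * b.2 - b.1 * a.2 ≠ 0) : L.IsInvertible := by
  refine isInvertible_of_injective ((injective_iff_map_eq_zero L).mpr fun v hv => ?_)
  rw [hL, Prod.ext_iff] at hv
  simp only [Prod.fst_add, Prod.snd_add, Prod.smul_fst, Prod.smul_snd, smul_eq_mul,
    Prod.fst_zero, Prod.snd_zero] at hv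
  have h₁ : (a.1 * b.2 - b.1 * a.2) * v.1 = 0 := by linear_combination b.2 * hv.1 - b.1 * hv.2
  have h₂ : (a.1 * b.2 - b.1 * a.2) * v.2 = 0 := by linear_combination a.1 * hv.2 - a.2 * hv.1
  exact Prod.ext ((mul_eq_zero.mp h₁).resolve_left hdet) ((mul_eq_zero.mp h₂).resolve_left hdet)

theorem HasFDerivAt.comp_inr_apply {E G : Type*} [NormedAddCommGroup E] [NormedSpace 𝕜 E]
    [NormedAddCommGroup G] [NormedSpace 𝕜 G] {f : E × (𝕜 × 𝕜) → G}
    {f' : E × (𝕜 × 𝕜) →L[𝕜] G} {u : E × (𝕜 × 𝕜)} {a b : G} (hf : HasFDerivAt f f' u)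
    (ha : HasDerivAt (fun w => f (u.1, (w, u.2.2))) a u.2.1)
    (hb : HasDerivAt (fun w => f (u.1, (u.2.1, w))) b u.2.2) (v : 𝕜 × 𝕜) :
    (f' ∘L .inr 𝕜 E (𝕜 × 𝕜)) v = v.1 • a + v.2 • b := by
  have ha' : a = f' (0, (1, 0)) := ha.unique <| hf.comp_hasDerivAt u.2.1 <|
    (hasDerivAt_const _ u.1).prodMk ((hasDerivAt_id' _).prodMk (hasDerivAt_const _ _))
  have hb' : b = f' (0, (0, 1)) := hb.unique <| hf.comp_hasDerivAt u.2.2 <|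
    (hasDerivAt_const _ u.1).prodMk ((hasDerivAt_const _ _).prodMk (hasDerivAt_id' _))
  have hv : ((0 : E), v) = v.1 • ((0 : E), ((1 : 𝕜), (0 : 𝕜))) + v.2 • (0, (0, 1)) := by
    ext <;> simp
  rw [ha', hb', ← map_smul, ← map_smul, ← map_add, ← hv]
  rfl

end Linear

lemma exp_eq_I_zpow {z : ℂ} (n : ℤ) (h : z = n * (π / 2 * I)) : exp z = I ^ n := by
  rw [h, exp_int_mul, exp_pi_div_two_mul_I]

lemma log_one_sub_I_add_log_one_add_I : log (1 - I) + log (1 + I) = Complex.log 2 := by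
  have hconj : (starRingEnd ℂ) (1 + I) = 1 - I := by simp [sub_eq_add_neg]
  have harg : arg (1 - I) + arg (1 + I) = 0 := by
    rw [← hconj, arg_conj, if_neg (by simp [arg_eq_pi_iff]), neg_add_cancel]
  rw [← log_mul (by simp [Complex.ext_iff]) (by simp [Complex.ext_iff])
    (by rw [harg]; exact ⟨by linarith [pi_pos], pi_pos.le⟩)]
  congr 1
  linear_combination -I_sq

namespace PhiS

local notation "𝔠" => (2 * (π : ℂ) * I)

noncomputable def e₁ (s p : ℂ × ℂ) : ℂ := exp (𝔠 * (s.2 - 1) - 𝔠 * p.1 - 𝔠 * p.2)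
noncomputable def e₂ (s p : ℂ × ℂ) : ℂ := exp (𝔠 * (s.2 - 1) - 𝔠 * p.2)
noncomputable def e₃ (p : ℂ × ℂ) : ℂ := exp (𝔠 * p.2)
noncomputable def e₄ (p : ℂ × ℂ) : ℂ := exp (𝔠 * (p.1 + p.2))
noncomputable def e₅ (p : ℂ × ℂ) : ℂ := exp (𝔠 * p.1)

-- `1 - e ∈ slitPlane` says exactly that `e ∉ [1, ∞)`.
def domain : Set ((ℂ × ℂ) × (ℂ × ℂ)) :=
  {x | 1 - e₁ x.1 x.2 ∈ slitPlane ∧ 1 - e₂ x.1 x.2 ∈ slitPlane ∧ 1 - e₃ x.2 ∈ slitPlane ∧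
    1 - e₄ x.2 ∈ slitPlane ∧ 1 - e₅ x.2 ∈ slitPlane}

noncomputable def partial₁ (ε : ℂ) (s p : ℂ × ℂ) : ℂ :=
  ε * 𝔠 * (s.1 - 1) - 𝔠 * (s.2 - 1) + log (1 - e₁ s p) + log (1 - e₄ p) - log (1 - e₅ p)

noncomputable def partial₂ (s p : ℂ × ℂ) : ℂ :=
  -(𝔠 * (s.2 - 1)) + log (1 - e₁ s p) - log (1 - e₂ s p) - log (1 - e₃ p) + log (1 - e₄ p)

noncomputable def grad (ε : ℂ) (x : (ℂ × ℂ) × (ℂ × ℂ)) : ℂ × ℂ :=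
  (partial₁ ε x.1 x.2, partial₂ x.1 x.2)

theorem hasDerivAt_fst (ε : ℂ) {s p : ℂ × ℂ} (h : (s, p) ∈ domain) :
    HasDerivAt (fun w => PhiS ε s.1 s.2 w p.2) (partial₁ ε s p) p.1 := by
  obtain ⟨h₁, -, -, h₄, h₅⟩ := h
  have hlin : HasDerivAt
      (fun w => ε * (𝔠 * (s.1 - 1)) * (𝔠 * (w - 1 / 2)) - 𝔠 * (s.2 - 1) * (𝔠 * w + 𝔠 * p.2))
      (ε * (𝔠 * (s.1 - 1)) * 𝔠 - 𝔠 * (s.2 - 1) * 𝔠) p.1 :=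
    hasDerivAt_of_affine _ _ fun w => by ring
  have L₁ : HasDerivAt (fun w => Li2 (e₁ s (w, p.2))) (-log (1 - e₁ s p) * -𝔠) p.1 :=
    hasDerivAt_Li2_exp_affine _ _ (fun w => by dsimp only; ring) h₁
  have L₄ : HasDerivAt (fun w => Li2 (e₄ (w, p.2))) (-log (1 - e₄ p) * 𝔠) p.1 :=
    hasDerivAt_Li2_exp_affine _ _ (fun w => by dsimp only; ring) h₄
  have L₅ : HasDerivAt (fun w => Li2 (e₅ (w, p.2))) (-log (1 - e₅ p) * 𝔠) p.1 :=
    hasDerivAt_Li2_exp_affine _ _ (fun w => by dsimp only; ring) h₅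
  refine ((((((hlin.add L₁).sub_const _).add_const _).sub L₄).add L₅).const_mul
    (1 / 𝔠)).congr_deriv ?_
  rw [partial₁]
  field_simp [two_pi_I_ne_zero]
  ring

theorem hasDerivAt_snd (ε : ℂ) {s p : ℂ × ℂ} (h : (s, p) ∈ domain) :
    HasDerivAt (fun w => PhiS ε s.1 s.2 p.1 w) (partial₂ s p) p.2 := by
  obtain ⟨h₁, h₂, h₃, h₄, -⟩ := h
  have hlin : HasDerivAt
      (fun w => ε * (𝔠 * (s.1 - 1)) * (𝔠 * (p.1 - 1 / 2)) - 𝔠 * (s.2 - 1) * (𝔠 * p.1 + 𝔠 * w))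
      (-(𝔠 * (s.2 - 1) * 𝔠)) p.2 :=
    hasDerivAt_of_affine _ _ fun w => by ring
  have L₁ : HasDerivAt (fun w => Li2 (e₁ s (p.1, w))) (-log (1 - e₁ s p) * -𝔠) p.2 :=
    hasDerivAt_Li2_exp_affine _ _ (fun w => by dsimp only; ring) h₁
  have L₂ : HasDerivAt (fun w => Li2 (e₂ s (p.1, w))) (-log (1 - e₂ s p) * -𝔠) p.2 :=
    hasDerivAt_Li2_exp_affine _ _ (fun w => by dsimp only; ring) h₂
  have L₃ : HasDerivAt (fun w => Li2 (e₃ (p.1, w))) (-log (1 - e₃ p) * 𝔠) p.2 :=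
    hasDerivAt_Li2_exp_affine _ _ (fun w => by dsimp only; ring) h₃
  have L₄ : HasDerivAt (fun w => Li2 (e₄ (p.1, w))) (-log (1 - e₄ p) * 𝔠) p.2 :=
    hasDerivAt_Li2_exp_affine _ _ (fun w => by dsimp only; ring) h₄
  refine ((((((hlin.add L₁).sub L₂).add L₃).sub L₄).add_const _).const_mul
    (1 / 𝔠)).congr_deriv ?_
  rw [partial₂]
  field_simp [two_pi_I_ne_zero]
  ring

noncomputable def hess₁₁ (s p : ℂ × ℂ) : ℂ :=
  𝔠 * (e₁ s p / (1 - e₁ s p) - e₄ p / (1 - e₄ p) + e₅ p / (1 - e₅ p))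

noncomputable def hess₁₂ (s p : ℂ × ℂ) : ℂ :=
  𝔠 * (e₁ s p / (1 - e₁ s p) - e₄ p / (1 - e₄ p))

noncomputable def hess₂₂ (s p : ℂ × ℂ) : ℂ :=
  𝔠 * (e₁ s p / (1 - e₁ s p) - e₂ s p / (1 - e₂ s p) + e₃ p / (1 - e₃ p) - e₄ p / (1 - e₄ p))

noncomputable def hessDet (x : (ℂ × ℂ) × (ℂ × ℂ)) : ℂ :=
  hess₁₁ x.1 x.2 * hess₂₂ x.1 x.2 - hess₁₂ x.1 x.2 ^ 2

theorem hasDerivAt_partial₁_fst (ε : ℂ) {s p : ℂ × ℂ} (h : (s, p) ∈ domain) :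
    HasDerivAt (fun w => partial₁ ε s (w, p.2)) (hess₁₁ s p) p.1 := by
  obtain ⟨h₁, -, -, h₄, h₅⟩ := h
  have L₁ : HasDerivAt (fun w => log (1 - e₁ s (w, p.2)))
      (-(e₁ s p / (1 - e₁ s p)) * -𝔠) p.1 :=
    hasDerivAt_log_one_sub_exp_affine _ _ (fun w => by dsimp only; ring) h₁
  have L₄ : HasDerivAt (fun w => log (1 - e₄ (w, p.2))) (-(e₄ p / (1 - e₄ p)) * 𝔠) p.1 :=
    hasDerivAt_log_one_sub_exp_affine _ _ (fun w => by dsimp only; ring) h₄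
  have L₅ : HasDerivAt (fun w => log (1 - e₅ (w, p.2))) (-(e₅ p / (1 - e₅ p)) * 𝔠) p.1 :=
    hasDerivAt_log_one_sub_exp_affine _ _ (fun w => by dsimp only; ring) h₅
  exact (((L₁.const_add (ε * 𝔠 * (s.1 - 1) - 𝔠 * (s.2 - 1))).add L₄).sub L₅).congr_deriv
    (by rw [hess₁₁]; ring)

theorem hasDerivAt_partial₁_snd (ε : ℂ) {s p : ℂ × ℂ} (h : (s, p) ∈ domain) :
    HasDerivAt (fun w => partial₁ ε s (p.1, w)) (hess₁₂ s p) p.2 := by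
  obtain ⟨h₁, -, -, h₄, -⟩ := h
  have L₁ : HasDerivAt (fun w => log (1 - e₁ s (p.1, w)))
      (-(e₁ s p / (1 - e₁ s p)) * -𝔠) p.2 :=
    hasDerivAt_log_one_sub_exp_affine _ _ (fun w => by dsimp only; ring) h₁
  have L₄ : HasDerivAt (fun w => log (1 - e₄ (p.1, w))) (-(e₄ p / (1 - e₄ p)) * 𝔠) p.2 :=
    hasDerivAt_log_one_sub_exp_affine _ _ (fun w => by dsimp only; ring) h₄
  exact (((L₁.const_add (ε * 𝔠 * (s.1 - 1) - 𝔠 * (s.2 - 1))).add L₄).sub_const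
    (log (1 - e₅ p))).congr_deriv (by rw [hess₁₂]; ring)

theorem hasDerivAt_partial₂_fst {s p : ℂ × ℂ} (h : (s, p) ∈ domain) :
    HasDerivAt (fun w => partial₂ s (w, p.2)) (hess₁₂ s p) p.1 := by
  obtain ⟨h₁, -, -, h₄, -⟩ := h
  have L₁ : HasDerivAt (fun w => log (1 - e₁ s (w, p.2)))
      (-(e₁ s p / (1 - e₁ s p)) * -𝔠) p.1 :=
    hasDerivAt_log_one_sub_exp_affine _ _ (fun w => by dsimp only; ring) h₁
  have L₄ : HasDerivAt (fun w => log (1 - e₄ (w, p.2))) (-(e₄ p / (1 - e₄ p)) * 𝔠) p.1 :=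
    hasDerivAt_log_one_sub_exp_affine _ _ (fun w => by dsimp only; ring) h₄
  exact ((((L₁.const_add (-(𝔠 * (s.2 - 1)))).sub_const (log (1 - e₂ s p))).sub_const
    (log (1 - e₃ p))).add L₄).congr_deriv (by rw [hess₁₂]; ring)

theorem hasDerivAt_partial₂_snd {s p : ℂ × ℂ} (h : (s, p) ∈ domain) :
    HasDerivAt (fun w => partial₂ s (p.1, w)) (hess₂₂ s p) p.2 := by
  obtain ⟨h₁, h₂, h₃, h₄, -⟩ := h
  have L₁ : HasDerivAt (fun w => log (1 - e₁ s (p.1, w)))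
      (-(e₁ s p / (1 - e₁ s p)) * -𝔠) p.2 :=
    hasDerivAt_log_one_sub_exp_affine _ _ (fun w => by dsimp only; ring) h₁
  have L₂ : HasDerivAt (fun w => log (1 - e₂ s (p.1, w)))
      (-(e₂ s p / (1 - e₂ s p)) * -𝔠) p.2 :=
    hasDerivAt_log_one_sub_exp_affine _ _ (fun w => by dsimp only; ring) h₂
  have L₃ : HasDerivAt (fun w => log (1 - e₃ (p.1, w))) (-(e₃ p / (1 - e₃ p)) * 𝔠) p.2 :=
    hasDerivAt_log_one_sub_exp_affine _ _ (fun w => by dsimp only; ring) h₃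
  have L₄ : HasDerivAt (fun w => log (1 - e₄ (p.1, w))) (-(e₄ p / (1 - e₄ p)) * 𝔠) p.2 :=
    hasDerivAt_log_one_sub_exp_affine _ _ (fun w => by dsimp only; ring) h₄
  exact ((((L₁.const_add (-(𝔠 * (s.2 - 1)))).sub L₂).sub L₃).add L₄).congr_deriv
    (by rw [hess₂₂]; ring)

theorem isOpen_domain : IsOpen domain := by
  have h : ∀ f : (ℂ × ℂ) × (ℂ × ℂ) → ℂ, Continuous f → IsOpen {x | 1 - exp (f x) ∈ slitPlane} :=
    fun f hf => isOpen_slitPlane.preimage (by fun_prop)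
  exact (h _ (by fun_prop)).inter <| (h _ (by fun_prop)).inter <| (h _ (by fun_prop)).inter <|
    (h _ (by fun_prop)).inter (h _ (by fun_prop))

theorem contDiffAt_grad (ε : ℂ) {n : WithTop ℕ∞} {x : (ℂ × ℂ) × (ℂ × ℂ)} (h : x ∈ domain) :
    ContDiffAt ℂ n (grad ε) x := by
  obtain ⟨h₁, h₂, h₃, h₄, h₅⟩ := h
  unfold grad partial₁ partial₂ e₁ e₂ e₃ e₄ e₅ at *
  fun_prop (disch := assumption)

theorem continuousAt_hessDet {x : (ℂ × ℂ) × (ℂ × ℂ)} (h : x ∈ domain) :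
    ContinuousAt hessDet x := by
  obtain ⟨h₁, h₂, h₃, h₄, h₅⟩ := h
  unfold hessDet hess₁₁ hess₁₂ hess₂₂ e₁ e₂ e₃ e₄ e₅ at *
  fun_prop (disch := exact slitPlane_ne_zero ‹_›)

lemma e₁_base : e₁ (1, 1) (1 / 2, 1 / 4) = I := by
  rw [e₁, exp_eq_I_zpow (-3) (by push_cast; ring)]
  simp [zpow_neg]

lemma e₂_base : e₂ (1, 1) (1 / 2, 1 / 4) = -I := by
  rw [e₂, exp_eq_I_zpow (-1) (by push_cast; ring)]
  simp

lemma e₃_base : e₃ (1 / 2, 1 / 4) = I := by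
  rw [e₃, exp_eq_I_zpow 1 (by push_cast; ring)]
  simp

lemma e₄_base : e₄ (1 / 2, 1 / 4) = -I := by
  rw [e₄, exp_eq_I_zpow 3 (by push_cast; ring)]
  simp

lemma e₅_base : e₅ (1 / 2, 1 / 4) = -1 := by
  rw [e₅, exp_eq_I_zpow 2 (by push_cast; ring)]
  simp

lemma base_mem_domain : (((1, 1), (1 / 2, 1 / 4)) : (ℂ × ℂ) × (ℂ × ℂ)) ∈ domain := by
  refine ⟨?_, ?_, ?_, ?_, ?_⟩ <;> dsimp only <;>
    simp only [e₁_base, e₂_base, e₃_base, e₄_base, e₅_base] <;> simp [mem_slitPlane_iff]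

lemma grad_base (ε : ℂ) : grad ε ((1, 1), (1 / 2, 1 / 4)) = 0 := by
  simp only [grad, partial₁, partial₂, e₁_base, e₂_base, e₃_base, e₄_base, e₅_base,
    Prod.mk_eq_zero]
  constructor
  · rw [sub_neg_eq_add, sub_neg_eq_add, show (1 : ℂ) + 1 = 2 by norm_num,
      ← log_one_sub_I_add_log_one_add_I]
    ring
  · ring

lemma hessDet_base : hessDet ((1, 1), (1 / 2, 1 / 4)) = 𝔠 ^ 2 * (-1 - I) := by
  simp only [hessDet, hess₁₁, hess₁₂, hess₂₂, e₁_base, e₂_base, e₃_base, e₄_base, e₅_base]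
  have h₁ : I / (1 - I) = (I - 1) / 2 := by
    rw [div_eq_div_iff (by simp [Complex.ext_iff]) two_ne_zero]
    linear_combination I_sq
  have h₂ : -I / (1 - -I) = (-I - 1) / 2 := by
    rw [div_eq_div_iff (by simp [Complex.ext_iff]) two_ne_zero]
    linear_combination I_sq
  rw [h₁, h₂]
  linear_combination 𝔠 ^ 2 * I_sq

lemma hessDet_base_ne_zero : hessDet ((1, 1), (1 / 2, 1 / 4)) ≠ 0 := by
  rw [hessDet_base]
  exact mul_ne_zero (pow_ne_zero 2 two_pi_I_ne_zero) (by simp [Complex.ext_iff])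

theorem isNondegCritPt_of_grad_eq_zero {ε : ℂ} {s p : ℂ × ℂ} (h : (s, p) ∈ domain)
    (hgrad : grad ε (s, p) = 0) (hdet : hessDet (s, p) ≠ 0) : IsNondegCritPt ε s p := by
  have hnear₁ : ∀ᶠ z in 𝓝 p.1, (s, (z, p.2)) ∈ domain :=
    (isOpen_domain.preimage (by fun_prop)).mem_nhds h
  have hnear₂ : ∀ᶠ z in 𝓝 p.2, (s, (p.1, z)) ∈ domain :=
    (isOpen_domain.preimage (by fun_prop)).mem_nhds h
  have h₁₁ : deriv (fun z => deriv (fun w => PhiS ε s.1 s.2 w p.2) z) p.1 = hess₁₁ s p :=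
    ((hasDerivAt_partial₁_fst ε h).congr_of_eventuallyEq
      (hnear₁.mono fun z hz => (hasDerivAt_fst ε hz).deriv)).deriv
  have h₁₂ : deriv (fun z => deriv (fun w => PhiS ε s.1 s.2 z w) p.2) p.1 = hess₁₂ s p :=
    ((hasDerivAt_partial₂_fst h).congr_of_eventuallyEq
      (hnear₁.mono fun z hz => (hasDerivAt_snd ε hz).deriv)).deriv
  have h₂₂ : deriv (fun z => deriv (fun w => PhiS ε s.1 s.2 p.1 w) z) p.2 = hess₂₂ s p :=
    ((hasDerivAt_partial₂_snd h).congr_of_eventuallyEq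
      (hnear₂.mono fun z hz => (hasDerivAt_snd ε hz).deriv)).deriv
  refine ⟨(hasDerivAt_fst ε h).deriv.trans (congrArg Prod.fst hgrad),
    (hasDerivAt_snd ε h).deriv.trans (congrArg Prod.snd hgrad), ?_⟩
  rwa [h₁₁, h₁₂, h₂₂]

theorem isInvertible_fderiv_grad_comp_inr (ε : ℂ) :
    (fderiv ℂ (grad ε) ((1, 1), (1 / 2, 1 / 4)) ∘L .inr ℂ (ℂ × ℂ) (ℂ × ℂ)).IsInvertible := by
  have hdiff := (contDiffAt_grad (n := 1) ε base_mem_domain).differentiableAt one_ne_zero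
  refine ContinuousLinearMap.isInvertible_of_apply_eq_smul_add_smul
    (hdiff.hasFDerivAt.comp_inr_apply
      ((hasDerivAt_partial₁_fst ε base_mem_domain).prodMk
        (hasDerivAt_partial₂_fst base_mem_domain))
      ((hasDerivAt_partial₁_snd ε base_mem_domain).prodMk
        (hasDerivAt_partial₂_snd base_mem_domain))) ?_
  simpa [hessDet, sq] using hessDet_base_ne_zero

theorem exists_nondegCritPt_branch (ε : ℂ) :
    ∃ U : Set (ℂ × ℂ), IsOpen U ∧ ((1, 1) : ℂ × ℂ) ∈ U ∧ ∃ g : ℂ × ℂ → ℂ × ℂ,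
      DifferentiableOn ℂ g U ∧ g (1, 1) = (1 / 2, 1 / 4) ∧
      ∀ s ∈ U, IsNondegCritPt ε s (g s) := by
  have hcd : ContDiffAt ℂ 1 (grad ε) ((1, 1), (1 / 2, 1 / 4)) := contDiffAt_grad ε base_mem_domain
  have hinv := isInvertible_fderiv_grad_comp_inr ε
  set ψ := hcd.implicitFunction one_ne_zero hinv
  have hψ : ψ (1, 1) = (1 / 2, 1 / 4) := hcd.implicitFunction_apply_self one_ne_zero hinv
  have hψ_smooth := hcd.contDiffAt_implicitFunction one_ne_zero hinv
  have hgraph : Tendsto (fun s => (s, ψ s)) (𝓝 (1, 1)) (𝓝 ((1, 1), (1 / 2, 1 / 4))) := by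
    rw [← hψ]
    exact (continuousAt_id.prodMk hψ_smooth.continuousAt).tendsto
  have hgood : ∀ᶠ s in 𝓝 ((1, 1) : ℂ × ℂ), DifferentiableAt ℂ ψ s ∧
      grad ε (s, ψ s) = 0 ∧ (s, ψ s) ∈ domain ∧ hessDet (s, ψ s) ≠ 0 := by
    filter_upwards [hψ_smooth.eventually (by simp),
      hcd.eventually_apply_implicitFunction one_ne_zero hinv,
      hgraph.eventually (isOpen_domain.mem_nhds base_mem_domain),
      hgraph.eventually ((continuousAt_hessDet base_mem_domain).eventually_ne
        hessDet_base_ne_zero)] with s hdiff hgrad hdom hdet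
    exact ⟨hdiff.differentiableAt one_ne_zero, hgrad.trans (grad_base ε), hdom, hdet⟩
  obtain ⟨U, hU, hUo, hmem⟩ := _root_.eventually_nhds_iff.mp hgood
  refine ⟨U, hUo, hmem, ψ, fun s hs => (hU s hs).1.differentiableWithinAt, hψ, fun s hs => ?_⟩
  obtain ⟨-, hgrad, hdom, hdet⟩ := hU s hs
  exact isNondegCritPt_of_grad_eq_zero hdom hgrad hdet

end PhiS

theorem stmt_6 :
    ∃ U : Set (ℂ × ℂ), IsOpen U ∧ ((1, 1) : ℂ × ℂ) ∈ U ∧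
    ∃ gp gm : ℂ × ℂ → ℂ × ℂ,
      DifferentiableOn ℂ gp U ∧ DifferentiableOn ℂ gm U ∧
      gp (1, 1) = (1/2, 1/4) ∧ gm (1, 1) = (1/2, 1/4) ∧
      ∀ s ∈ U, IsNondegCritPt 1 s (gp s) ∧ IsNondegCritPt (-1) s (gm s) := by
  obtain ⟨U₁, hU₁, h₁U₁, gp, hgp, hgp₁, hgp_nondeg⟩ := PhiS.exists_nondegCritPt_branch 1
  obtain ⟨U₂, hU₂, h₁U₂, gm, hgm, hgm₁, hgm_nondeg⟩ := PhiS.exists_nondegCritPt_branch (-1)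
  exact ⟨U₁ ∩ U₂, hU₁.inter hU₂, ⟨h₁U₁, h₁U₂⟩, gp, gm, hgp.mono inter_subset_left,
    hgm.mono inter_subset_right, hgp₁, hgm₁, fun s hs => ⟨hgp_nondeg s hs.1, hgm_nondeg s hs.2⟩⟩
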